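/- arXiv:2211.02594 — 4 statements merged into one kernel-verified Lean document; each statement's English description precedes it below -/
import Mathlib

section
/- Let X be an n-dimensional Banach space (n ∈ ℕ). Then the identity operator id: X → X is nuclear and its nuclear norm equals the dimension: ν(id_X) = n. -/
/-- A nuclear representation of a bounded linear operator `T : X → Y`:
functionals `a k` in the dual of `X` and elements `y k` of `Y` with
`∑ ‖a k‖ ‖y k‖ < ∞` and `T x = ∑ (a k x) • y k` for all `x`. -/
def IsNuclearRep {X Y : Type*} [NormedAddCommGroup X] [NormedSpace ℂ X]
    [NormedAddCommGroup Y] [NormedSpace ℂ Y] (T : X →L[ℂ] Y)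
    (a : ℕ → (X →L[ℂ] ℂ)) (y : ℕ → Y) : Prop :=
  Summable (fun k => ‖a k‖ * ‖y k‖) ∧ ∀ x : X, HasSum (fun k => a k x • y k) (T x)

/-- `T` is nuclear if it admits a nuclear representation. -/
def IsNuclear {X Y : Type*} [NormedAddCommGroup X] [NormedSpace ℂ X]
    [NormedAddCommGroup Y] [NormedSpace ℂ Y] (T : X →L[ℂ] Y) : Prop :=
  ∃ a y, IsNuclearRep T a y

/-- The nuclear norm of `T`: the infimum of `∑ ‖a k‖ ‖y k‖` over all nuclear
representations of `T`. -/
noncomputable def nuclearNorm {X Y : Type*} [NormedAddCommGroup X] [NormedSpace ℂ X]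
    [NormedAddCommGroup Y] [NormedSpace ℂ Y] (T : X →L[ℂ] Y) : ℝ :=
  sInf {c : ℝ | ∃ a y, IsNuclearRep T a y ∧ c = ∑' k, ‖a k‖ * ‖y k‖}

/-!
Upper bound: Auerbach's lemma gives a basis `e` of unit vectors whose coordinate functionals
`a i` have norm at most one, so `id = ∑ a i ⊗ e i` is a representation of cost `≤ n`. The basis
is found by maximising `‖det (e 1, …, e n)‖` over tuples of unit vectors; Cramer's rule writes
`a i x` as `det (…, x, …) / det e`, which maximality bounds by `‖x‖`.

Lower bound: every nuclear representation `∑ a k ⊗ y k` of an operator converges in operator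
norm, so the trace, being continuous, gives `n = tr id = ∑ a k (y k)`, which is at most
`∑ ‖a k‖ ‖y k‖`.
-/

open Function Module Set

section Auerbach

variable {𝕜 X ι : Type*} [RCLike 𝕜] [NormedAddCommGroup X] [NormedSpace 𝕜 X] [Fintype ι]

lemma Module.Basis.continuous_det [DecidableEq ι] [FiniteDimensional 𝕜 X] (B : Basis ι 𝕜 X) :
    Continuous B.det := by
  have h : ⇑B.det = fun v => (B.toMatrix v).det := funext B.det_apply
  rw [h]
  exact Continuous.matrix_det <| continuous_pi fun i => continuous_pi fun j =>
    (B.coord i).continuous_of_finiteDimensional.comp (continuous_apply j)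

lemma AlternatingMap.norm_apply_le_of_isMaxOn {D : X [⋀^ι]→ₗ[𝕜] 𝕜} {e : ι → X}
    (hmax : IsMaxOn (fun v => ‖D v‖) (univ.pi fun _ => Metric.sphere 0 1) e) (v : ι → X) :
    ‖D v‖ ≤ ‖D e‖ * ∏ i, ‖v i‖ := by
  by_cases hv : ∃ i, v i = 0
  · obtain ⟨i, hi⟩ := hv
    rw [D.map_coord_zero i hi, norm_zero]
    positivity
  replace hv : ∀ i, v i ≠ 0 := fun i h => hv ⟨i, h⟩
  set u : ι → X := fun i => (‖v i‖⁻¹ : 𝕜) • v i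
  have hu : u ∈ univ.pi fun _ => Metric.sphere (0 : X) 1 := fun i _ => by
    simpa [u] using norm_smul_inv_norm (𝕜 := 𝕜) (hv i)
  have hvu : D v = (∏ i, (‖v i‖ : 𝕜)) • D u := by
    rw [← D.map_smul_univ]
    congr 1
    funext i
    rw [smul_smul, mul_inv_cancel₀ (by simpa using hv i), one_smul]
  calc ‖D v‖ = (∏ i, ‖v i‖) * ‖D u‖ := by simp [hvu]
    _ ≤ (∏ i, ‖v i‖) * ‖D e‖ := by gcongr; exact hmax hu
    _ = ‖D e‖ * ∏ i, ‖v i‖ := mul_comm _ _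

lemma Module.Basis.exists_isMaxOn_norm_det [DecidableEq ι] [FiniteDimensional 𝕜 X]
    (B : Basis ι 𝕜 X) :
    ∃ e ∈ univ.pi fun _ => Metric.sphere (0 : X) 1,
      IsMaxOn (fun v => ‖B.det v‖) (univ.pi fun _ => Metric.sphere 0 1) e := by
  have := FiniteDimensional.proper_rclike 𝕜 X
  have hB : (fun i => (‖B i‖⁻¹ : 𝕜) • B i) ∈ univ.pi fun _ => Metric.sphere (0 : X) 1 :=
    fun i _ => by simpa using norm_smul_inv_norm (𝕜 := 𝕜) (B.ne_zero i)
  exact (isCompact_univ_pi fun _ => isCompact_sphere 0 1).exists_isMaxOn ⟨_, hB⟩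
    B.continuous_det.norm.continuousOn

theorem Module.Basis.exists_auerbach [DecidableEq ι] [FiniteDimensional 𝕜 X]
    (B : Basis ι 𝕜 X) : ∃ E : Basis ι 𝕜 X, (∀ i, ‖E i‖ = 1) ∧ ∀ i x, ‖E.coord i x‖ ≤ ‖x‖ := by
  obtain ⟨e, he, hmax⟩ := B.exists_isMaxOn_norm_det
  have hnorm : ∀ i, ‖e i‖ = 1 := fun i => by simpa using he i (mem_univ i)
  have hbound := AlternatingMap.norm_apply_le_of_isMaxOn hmax
  have hdet : 0 < ‖B.det e‖ := by
    have := hbound B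
    rw [B.det_self, norm_one] at this
    exact norm_pos_iff.2 fun h => by norm_num [h] at this
  obtain ⟨hli, hsp⟩ := B.is_basis_iff_det.2 (isUnit_iff_ne_zero.2 (norm_pos_iff.1 hdet))
  refine ⟨Basis.mk hli hsp.ge, by simpa using hnorm, fun i x => ?_⟩
  have hcramer := congr($(B.det_smul_mk_coord_eq_det_update hli hsp.ge i) x)
  have hprod : ∏ j, ‖update e i x j‖ = ‖x‖ := by
    rw [Finset.prod_eq_single i (fun j _ hj => by rw [update_of_ne hj, hnorm]) (by simp),
      update_self]
  have hupdate := hbound (update e i x)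
  rw [hprod] at hupdate
  simp only [LinearMap.smul_apply, MultilinearMap.toLinearMap_apply, smul_eq_mul] at hcramer
  refine le_of_mul_le_mul_left ?_ hdet
  rw [← norm_mul, hcramer]
  exact hupdate

end Auerbach

lemma Function.extend_zero_apply₂ {α β γ δ ε : Type*} [Zero γ] [Zero δ] [Zero ε] {g : α → β}
    (hg : Injective g) (φ : γ → δ → ε) (hφ : φ 0 0 = 0) (a : α → γ) (b : α → δ) :
    (fun k => φ (extend g a 0 k) (extend g b 0 k)) = extend g (fun i => φ (a i) (b i)) 0 := by
  funext k
  by_cases hk : ∃ i, g i = k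
  · obtain ⟨i, rfl⟩ := hk
    simp [hg.extend_apply]
  · simp [extend_apply' _ _ _ hk, hφ]

section Nuclear

variable {X Y : Type*} [NormedAddCommGroup X] [NormedSpace ℂ X] [NormedAddCommGroup Y]
  [NormedSpace ℂ Y]

lemma isNuclearRep_extend {ι : Type*} [Fintype ι] {g : ι → ℕ} (hg : Injective g)
    {T : X →L[ℂ] Y} {a : ι → StrongDual ℂ X} {y : ι → Y} (hT : ∀ x, ∑ i, a i x • y i = T x) :
    IsNuclearRep T (extend g a 0) (extend g y 0) ∧
      ∑' k, ‖extend g a 0 k‖ * ‖extend g y 0 k‖ = ∑ i, ‖a i‖ * ‖y i‖ := by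
  have hcost : HasSum (fun k => ‖extend g a 0 k‖ * ‖extend g y 0 k‖) (∑ i, ‖a i‖ * ‖y i‖) := by
    rw [extend_zero_apply₂ hg (fun c v => ‖c‖ * ‖v‖) (by simp), hasSum_extend_zero hg]
    exact hasSum_fintype _
  refine ⟨⟨hcost.summable, fun x => ?_⟩, hcost.tsum_eq⟩
  rw [extend_zero_apply₂ hg (fun (c : StrongDual ℂ X) v => c x • v) (by simp),
    hasSum_extend_zero hg, ← hT x]
  exact hasSum_fintype _

lemma IsNuclearRep.hasSum_smulRight [CompleteSpace Y] {T : X →L[ℂ] Y} {a : ℕ → StrongDual ℂ X}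
    {y : ℕ → Y} (h : IsNuclearRep T a y) : HasSum (fun k => (a k).smulRight (y k)) T := by
  obtain ⟨S, hS⟩ : Summable fun k => (a k).smulRight (y k) :=
    .of_norm (by simpa only [ContinuousLinearMap.norm_smulRight_apply] using h.1)
  convert hS
  ext x
  exact (h.2 x).unique (by simpa using hS.mapL (ContinuousLinearMap.apply ℂ Y x))

lemma IsNuclearRep.hasSum_trace [FiniteDimensional ℂ X] {T : X →L[ℂ] X}
    {a : ℕ → StrongDual ℂ X} {y : ℕ → X} (h : IsNuclearRep T a y) :
    HasSum (fun k => a k (y k)) (LinearMap.trace ℂ X T) := by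
  let tr : (X →L[ℂ] X) →L[ℂ] ℂ :=
    ((LinearMap.trace ℂ X).comp (ContinuousLinearMap.coeLM ℂ)).toContinuousLinearMap
  simpa [tr] using h.hasSum_smulRight.mapL tr

lemma IsNuclearRep.norm_trace_le [FiniteDimensional ℂ X] {T : X →L[ℂ] X}
    {a : ℕ → StrongDual ℂ X} {y : ℕ → X} (h : IsNuclearRep T a y) :
    ‖LinearMap.trace ℂ X T‖ ≤ ∑' k, ‖a k‖ * ‖y k‖ := by
  have hle : ∀ k, ‖a k (y k)‖ ≤ ‖a k‖ * ‖y k‖ := fun k => (a k).le_opNorm (y k)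
  have hsum := Summable.of_nonneg_of_le (fun k => norm_nonneg _) hle h.1
  rw [← h.hasSum_trace.tsum_eq]
  exact (norm_tsum_le_tsum_norm hsum).trans (hsum.tsum_le_tsum hle h.1)

lemma exists_isNuclearRep_id_tsum_le_finrank [FiniteDimensional ℂ X] :
    ∃ a y, IsNuclearRep (ContinuousLinearMap.id ℂ X) a y ∧
      ∑' k, ‖a k‖ * ‖y k‖ ≤ finrank ℂ X := by
  obtain ⟨E, hE, hcoord⟩ := (Module.finBasis ℂ X).exists_auerbach
  let a i : StrongDual ℂ X := (E.coord i).mkContinuous 1 (by simpa using hcoord i)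
  obtain ⟨hrep, hcost⟩ := isNuclearRep_extend Fin.val_injective
    (T := ContinuousLinearMap.id ℂ X) (a := a) (y := E) (fun x => by simp [a])
  refine ⟨_, _, hrep, ?_⟩
  calc ∑' k, _ = ∑ i, ‖a i‖ * ‖E i‖ := hcost
    _ ≤ ∑ _i : Fin (finrank ℂ X), 1 := Finset.sum_le_sum fun i _ => by
      rw [hE, mul_one]
      exact LinearMap.mkContinuous_norm_le _ zero_le_one _
    _ = finrank ℂ X := by simp

end Nuclear

theorem stmt0_general (X : Type*) [NormedAddCommGroup X] [NormedSpace ℂ X]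
    [FiniteDimensional ℂ X] (n : ℕ) (hdim : Module.finrank ℂ X = n) :
    IsNuclear (ContinuousLinearMap.id ℂ X) ∧
      nuclearNorm (ContinuousLinearMap.id ℂ X) = n := by
  have hlower : ∀ a y, IsNuclearRep (ContinuousLinearMap.id ℂ X) a y →
      (n : ℝ) ≤ ∑' k, ‖a k‖ * ‖y k‖ := fun a y h => by
    simpa [hdim] using h.norm_trace_le
  obtain ⟨a, y, hrep, hupper⟩ := exists_isNuclearRep_id_tsum_le_finrank (X := X)
  rw [hdim] at hupper
  refine ⟨⟨a, y, hrep⟩, IsLeast.csInf_eq ⟨⟨a, y, hrep, ?_⟩, ?_⟩⟩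
  · exact le_antisymm (hlower a y hrep) hupper
  · rintro c ⟨a', y', h', rfl⟩
    exact hlower a' y' h'

/-- If `X` is an `n`-dimensional Banach space, then the identity operator
on `X` is nuclear, with nuclear norm equal to `n`. -/
theorem stmt0 (X : Type*) [NormedAddCommGroup X] [NormedSpace ℂ X] [CompleteSpace X]
    [FiniteDimensional ℂ X] (n : ℕ) (hdim : Module.finrank ℂ X = n) :
    IsNuclear (ContinuousLinearMap.id ℂ X) ∧
      nuclearNorm (ContinuousLinearMap.id ℂ X) = n :=
  stmt0_general X n hdim
end

section
/- Let 0 < p₁ ≤ u₁ < ∞, 0 < p₂ ≤ u₂ < ∞, and j ∈ ℕ₀. Then the operator norm of the identity map id_j: m^{2^{jd}}_{u₁,p₁} → m^{2^{jd}}_{u₂,p₂} satisfies: ‖id_j‖ = 1 if p₁ ≥ p₂ and u₂ ≥ u₁; ‖id_j‖ = 1 if p₁ < p₂ and p₂/u₂ ≤ p₁/u₁; and ‖id_j‖ = 2^{jd(1/u₂ − 1/u₁)} if p₁ ≥ p₂ and u₂ < u₁. -/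
/-- The index set `𝒦_j = {k ∈ ℤ^d : Q_{0,k} ⊆ Q_{-j,0}}`, identified with
`(Fin d → Fin (2^j))` (the unit cubes inside the cube `[0, 2^j)^d`). -/
abbrev MorreyIdx (d j : ℕ) := Fin d → Fin (2 ^ j)

/-- `Q_{0,k} ⊆ Q_{-ν,m}` for a dyadic cube `Q_{-ν,m} ⊆ Q_{-j,0}` of side length `2^ν`,
where the cube is encoded by `m : Fin d → Fin (2^(j-ν))`: the condition is
`k i / 2^ν = m i` for all `i`. -/
def memSubcube {d j : ℕ} (ν : ℕ) (m : Fin d → ℕ) (k : MorreyIdx d j) : Prop :=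
  ∀ i, (k i : ℕ) / 2 ^ ν = m i

instance {d j : ℕ} (ν : ℕ) (m : Fin d → ℕ) (k : MorreyIdx d j) :
    Decidable (memSubcube ν m k) := by unfold memSubcube; infer_instance

/-- The norm of the finite-dimensional Morrey sequence space `m^{2^{jd}}_{u,p}`:
`‖λ‖ = max_{ν ≤ j, Q_{-ν,m} ⊆ Q_{-j,0}} |Q_{-ν,m}|^{1/u - 1/p}
   (∑_{k : Q_{0,k} ⊆ Q_{-ν,m}} |λ_k|^p)^{1/p}`, with `|Q_{-ν,m}| = 2^{νd}`. -/
noncomputable def morreyNorm (d j : ℕ) (u p : ℝ) (lam : MorreyIdx d j → ℂ) : ℝ :=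
  ⨆ ν : Fin (j + 1), ⨆ m : Fin d → Fin (2 ^ (j - (ν : ℕ))),
    (2 : ℝ) ^ ((((ν : ℕ) * d : ℕ) : ℝ) * (1 / u - 1 / p)) *
      (∑ k : MorreyIdx d j,
        if memSubcube (ν : ℕ) (fun i => (m i : ℕ)) k then ‖lam k‖ ^ p else 0) ^ (1 / p)

/-- The sup-norm on `ℂ^{𝒦_j}`, i.e. the norm of `ℓ∞^{2^{jd}}`. -/
noncomputable def supNorm (d j : ℕ) (lam : MorreyIdx d j → ℂ) : ℝ :=
  ⨆ k : MorreyIdx d j, ‖lam k‖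

/-- The operator norm of the identity map `(ℂ^{𝒦_j}, N₁) → (ℂ^{𝒦_j}, N₂)`. -/
noncomputable def idNorm (d j : ℕ) (N₁ N₂ : (MorreyIdx d j → ℂ) → ℝ) : ℝ :=
  sInf {C : ℝ | 0 ≤ C ∧ ∀ lam : MorreyIdx d j → ℂ, N₂ lam ≤ C * N₁ lam}

/-! For `p₂ ≤ p₁`, Hölder's inequality on a dyadic cube `Q` with `|Q| = 2^{νd}` points gives
`|Q|^{1/u₂-1/p₂} ‖λ‖_{ℓ^{p₂}(Q)} ≤ |Q|^{1/u₂-1/u₁} · |Q|^{1/u₁-1/p₁} ‖λ‖_{ℓ^{p₁}(Q)}`,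
so the norm of the identity is at most the largest factor `2^{νd(1/u₂-1/u₁)}`, `ν ≤ j`.
For `p₁ < p₂`, every `|λ_k|` is at most `N = ‖λ | m_{u₁,p₁}‖` (take `Q` a single point), hence
`∑_Q |λ_k|^{p₂} ≤ N^{p₂-p₁} ∑_Q |λ_k|^{p₁} ≤ |Q|^{1-p₁/u₁} N^{p₂} ≤ |Q|^{1-p₂/u₂} N^{p₂}`,
which is the `m_{u₂,p₂}` condition on `Q`.
The bounds are attained by a unit vector, of norm `1` in every `m_{u,p}` with `p ≤ u`, and by the
constant sequence `1`, of norm `2^{jd/u}`. -/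

open Finset Real

theorem Lp_le_card_rpow_mul_Lq_of_nonneg {ι : Type*} (s : Finset ι) {f : ι → ℝ} {p q : ℝ}
    (hf : ∀ i ∈ s, 0 ≤ f i) (hp : 0 < p) (hpq : p ≤ q) :
    (∑ i ∈ s, f i ^ p) ^ (1 / p) ≤ (#s : ℝ) ^ (1 / p - 1 / q) * (∑ i ∈ s, f i ^ q) ^ (1 / q) := by
  have hq : 0 < q := hp.trans_le hpq
  have hfp : ∀ i ∈ s, 0 ≤ f i ^ p := fun i hi => rpow_nonneg (hf i hi) p
  have hpow : ∀ i ∈ s, (f i ^ p) ^ (q / p) = f i ^ q := fun i hi => by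
    rw [← rpow_mul (hf i hi), mul_div_cancel₀ _ hp.ne']
  have key := rpow_sum_le_const_mul_sum_rpow_of_nonneg s ((one_le_div hp).2 hpq) hfp
  rw [sum_congr rfl hpow] at key
  have key' := rpow_le_rpow (rpow_nonneg (sum_nonneg hfp) _) key (one_div_nonneg.2 hq.le)
  rwa [← rpow_mul (sum_nonneg hfp),
    mul_rpow (by positivity) (sum_nonneg fun i hi => rpow_nonneg (hf i hi) q),
    ← rpow_mul (Nat.cast_nonneg _), show q / p * (1 / q) = 1 / p by field_simp,
    show (q / p - 1) * (1 / q) = 1 / p - 1 / q by field_simp] at key'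

namespace Morrey

variable {d j : ℕ}

def subcube (ν : ℕ) (m : Fin d → ℕ) : Finset (MorreyIdx d j) := univ.filter (memSubcube ν m)

lemma card_subcube_le (ν : ℕ) (m : Fin d → ℕ) :
    #(subcube ν m : Finset (MorreyIdx d j)) ≤ 2 ^ (ν * d) := by
  have hpos : 0 < 2 ^ ν := by positivity
  -- a point of the cube is determined by its offsets `k i % 2 ^ ν` from the corner
  calc #(subcube ν m : Finset (MorreyIdx d j))
      ≤ #(univ : Finset (Fin d → Fin (2 ^ ν))) :=
        card_le_card_of_injOn (fun k i => ⟨k i % 2 ^ ν, Nat.mod_lt _ hpos⟩)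
          (fun _ _ => mem_coe.2 (mem_univ _)) ?_
    _ = 2 ^ (ν * d) := by simp [pow_mul]
  intro k hk k' hk' h
  simp only [subcube, coe_filter, mem_univ, true_and, memSubcube] at hk hk'
  funext i
  have hmod : (k i : ℕ) % 2 ^ ν = k' i % 2 ^ ν := congrArg Fin.val (congrFun h i)
  apply Fin.ext
  rw [← Nat.div_add_mod (k i) (2 ^ ν), ← Nat.div_add_mod (k' i) (2 ^ ν), hk i, hk' i, hmod]

lemma card_subcube_le_two_rpow (ν : ℕ) (m : Fin d → ℕ) :
    (#(subcube ν m : Finset (MorreyIdx d j)) : ℝ) ≤ 2 ^ ((ν * d : ℕ) : ℝ) := by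
  rw [rpow_natCast]
  exact_mod_cast card_subcube_le ν m

lemma subcube_zero (k : MorreyIdx d j) : subcube 0 (fun i => k i) = {k} := by
  ext k'
  simp [subcube, memSubcube, funext_iff, Fin.ext_iff]

lemma subcube_self : subcube j (fun _ => 0) = (univ : Finset (MorreyIdx d j)) := by
  ext k
  simp [subcube, memSubcube, Nat.div_eq_of_lt (k _).isLt]

noncomputable def cubeTerm (u p : ℝ) (lam : MorreyIdx d j → ℂ) (ν : ℕ) (m : Fin d → ℕ) : ℝ :=
  2 ^ (((ν * d : ℕ) : ℝ) * (1 / u - 1 / p)) * (∑ k ∈ subcube ν m, ‖lam k‖ ^ p) ^ (1 / p)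

variable {u p : ℝ} {lam : MorreyIdx d j → ℂ}

lemma cubeTerm_nonneg (ν : ℕ) (m : Fin d → ℕ) : 0 ≤ cubeTerm u p lam ν m := by
  unfold cubeTerm; positivity

lemma cubeTerm_le_iff (hp : 0 < p) {N : ℝ} (hN : 0 ≤ N) (ν : ℕ) (m : Fin d → ℕ) :
    cubeTerm u p lam ν m ≤ N ↔
      ∑ k ∈ subcube ν m, ‖lam k‖ ^ p ≤ 2 ^ (((ν * d : ℕ) : ℝ) * (1 - p / u)) * N ^ p := by
  have hS : 0 ≤ ∑ k ∈ subcube ν m, ‖lam k‖ ^ p := by positivity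
  rw [cubeTerm, ← le_div_iff₀' (by positivity), one_div, rpow_inv_le_iff_of_pos hS
    (by positivity) hp, div_rpow hN (by positivity), ← rpow_mul zero_le_two, div_eq_mul_inv,
    ← rpow_neg zero_le_two, mul_comm (N ^ p)]
  congr! 3
  field_simp
  ring

lemma morreyNorm_eq_iSup (u p : ℝ) (lam : MorreyIdx d j → ℂ) :
    morreyNorm d j u p lam =
      ⨆ ν : Fin (j + 1), ⨆ m : Fin d → Fin (2 ^ (j - (ν : ℕ))),
        cubeTerm u p lam ν (fun i => m i) := by
  simp only [morreyNorm, cubeTerm, subcube, sum_filter]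

lemma cubeTerm_le_morreyNorm {ν : ℕ} (hν : ν ≤ j) {m : Fin d → ℕ}
    (hm : ∀ i, m i < 2 ^ (j - ν)) :
    cubeTerm u p lam ν m ≤ morreyNorm d j u p lam := by
  rw [morreyNorm_eq_iSup]
  refine le_ciSup_of_le (Set.finite_range _).bddAbove ⟨ν, Nat.lt_succ_of_le hν⟩ ?_
  exact le_ciSup_of_le (Set.finite_range _).bddAbove (fun i => ⟨m i, hm i⟩) le_rfl

lemma morreyNorm_le {C : ℝ}
    (h : ∀ ν ≤ j, ∀ m : Fin d → ℕ, (∀ i, m i < 2 ^ (j - ν)) → cubeTerm u p lam ν m ≤ C) :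
    morreyNorm d j u p lam ≤ C := by
  rw [morreyNorm_eq_iSup]
  exact ciSup_le fun ν => ciSup_le fun m => h ν (Nat.le_of_lt_succ ν.isLt) _ fun i => (m i).isLt

lemma norm_le_morreyNorm (hp : 0 < p) (k : MorreyIdx d j) :
    ‖lam k‖ ≤ morreyNorm d j u p lam := by
  have h := cubeTerm_le_morreyNorm (u := u) (p := p) (lam := lam) (ν := 0) (Nat.zero_le j)
    (m := fun i => k i) fun i => (k i).isLt
  simpa [cubeTerm, subcube_zero, ← rpow_mul (norm_nonneg _), hp.ne'] using h

lemma morreyNorm_nonneg (hp : 0 < p) : 0 ≤ morreyNorm d j u p lam :=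
  (norm_nonneg _).trans (norm_le_morreyNorm hp 0)

lemma cubeTerm_le_two_rpow_mul {u₁ p₁ u₂ p₂ : ℝ} (hp₂ : 0 < p₂) (hp : p₂ ≤ p₁)
    (ν : ℕ) (m : Fin d → ℕ) :
    cubeTerm u₂ p₂ lam ν m ≤
      2 ^ (((ν * d : ℕ) : ℝ) * (1 / u₂ - 1 / u₁)) * cubeTerm u₁ p₁ lam ν m := by
  set E : ℝ := ((ν * d : ℕ) : ℝ)
  have hcard :
      (#(subcube ν m : Finset (MorreyIdx d j)) : ℝ) ^ (1 / p₂ - 1 / p₁) ≤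
        2 ^ (E * (1 / p₂ - 1 / p₁)) := by
    rw [rpow_mul zero_le_two]
    exact rpow_le_rpow (Nat.cast_nonneg _) (card_subcube_le_two_rpow ν m)
      (sub_nonneg.2 (one_div_le_one_div_of_le hp₂ hp))
  calc cubeTerm u₂ p₂ lam ν m
      ≤ 2 ^ (E * (1 / u₂ - 1 / p₂)) * ((#(subcube ν m) : ℝ) ^ (1 / p₂ - 1 / p₁) *
          (∑ k ∈ subcube ν m, ‖lam k‖ ^ p₁) ^ (1 / p₁)) :=
        mul_le_mul_of_nonneg_left
          (Lp_le_card_rpow_mul_Lq_of_nonneg _ (fun _ _ => norm_nonneg _) hp₂ hp) (by positivity)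
    _ ≤ 2 ^ (E * (1 / u₂ - 1 / p₂)) * (2 ^ (E * (1 / p₂ - 1 / p₁)) *
          (∑ k ∈ subcube ν m, ‖lam k‖ ^ p₁) ^ (1 / p₁)) := by gcongr
    _ = 2 ^ (E * (1 / u₂ - 1 / u₁)) * cubeTerm u₁ p₁ lam ν m := by
        rw [cubeTerm, ← mul_assoc, ← mul_assoc, ← rpow_add two_pos, ← rpow_add two_pos]
        congr 2
        ring

lemma morreyNorm_le_mul_of_le {u₁ p₁ u₂ p₂ : ℝ} (hp₂ : 0 < p₂) (hp : p₂ ≤ p₁) {C : ℝ}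
    (hC : ∀ ν ≤ j, (2 : ℝ) ^ (((ν * d : ℕ) : ℝ) * (1 / u₂ - 1 / u₁)) ≤ C)
    (lam : MorreyIdx d j → ℂ) :
    morreyNorm d j u₂ p₂ lam ≤ C * morreyNorm d j u₁ p₁ lam :=
  morreyNorm_le fun ν hν m hm => (cubeTerm_le_two_rpow_mul hp₂ hp ν m).trans <|
    mul_le_mul (hC ν hν) (cubeTerm_le_morreyNorm hν hm) (cubeTerm_nonneg ν m)
      ((rpow_nonneg zero_le_two _).trans (hC ν hν))

lemma morreyNorm_le_of_div_le {u₁ p₁ u₂ p₂ : ℝ} (hp₁ : 0 < p₁) (hp : p₁ ≤ p₂)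
    (hpu : p₂ / u₂ ≤ p₁ / u₁) (lam : MorreyIdx d j → ℂ) :
    morreyNorm d j u₂ p₂ lam ≤ morreyNorm d j u₁ p₁ lam := by
  have hp₂ : 0 < p₂ := hp₁.trans_le hp
  set N := morreyNorm d j u₁ p₁ lam
  have hN : 0 ≤ N := morreyNorm_nonneg hp₁
  -- every `‖lam k‖ ≤ N`, so passing from `p₁` to `p₂` costs at most a factor `N ^ (p₂ - p₁)`
  have hpow : ∀ k, ‖lam k‖ ^ p₂ ≤ N ^ (p₂ - p₁) * ‖lam k‖ ^ p₁ := fun k => by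
    rw [← sub_add_cancel p₂ p₁, rpow_add' (norm_nonneg _) (by simpa using hp₂.ne'),
      add_sub_cancel_right]
    exact mul_le_mul_of_nonneg_right
      (rpow_le_rpow (norm_nonneg _) (norm_le_morreyNorm hp₁ k) (sub_nonneg.2 hp)) (by positivity)
  refine morreyNorm_le fun ν hν m hm => (cubeTerm_le_iff hp₂ hN ν m).2 ?_
  have hS₁ := (cubeTerm_le_iff hp₁ hN ν m).1 (cubeTerm_le_morreyNorm hν hm)
  calc ∑ k ∈ subcube ν m, ‖lam k‖ ^ p₂
      ≤ N ^ (p₂ - p₁) * ∑ k ∈ subcube ν m, ‖lam k‖ ^ p₁ := by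
        rw [mul_sum]; exact sum_le_sum fun k _ => hpow k
    _ ≤ N ^ (p₂ - p₁) * (2 ^ (((ν * d : ℕ) : ℝ) * (1 - p₁ / u₁)) * N ^ p₁) := by gcongr
    _ = 2 ^ (((ν * d : ℕ) : ℝ) * (1 - p₁ / u₁)) * N ^ p₂ := by
        rw [mul_left_comm, ← rpow_add' hN (by simpa using hp₂.ne'), sub_add_cancel]
    _ ≤ 2 ^ (((ν * d : ℕ) : ℝ) * (1 - p₂ / u₂)) * N ^ p₂ := by gcongr; exact one_le_two

lemma morreyNorm_single (hp : 0 < p) (hpu : p ≤ u) (k₀ : MorreyIdx d j) :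
    morreyNorm d j u p (Pi.single k₀ 1) = 1 := by
  refine le_antisymm (morreyNorm_le fun ν _ m _ => (cubeTerm_le_iff hp zero_le_one ν m).2 ?_) ?_
  · have hterm : ∀ k, ‖(Pi.single k₀ 1 : MorreyIdx d j → ℂ) k‖ ^ p = if k = k₀ then 1 else 0 :=
      fun k => by by_cases h : k = k₀ <;> simp [h, zero_rpow hp.ne']
    have hS : ∑ k ∈ subcube ν m, ‖(Pi.single k₀ 1 : MorreyIdx d j → ℂ) k‖ ^ p ≤ 1 := by
      rw [sum_congr rfl fun k _ => hterm k, sum_ite_eq']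
      split_ifs <;> norm_num
    rw [one_rpow, mul_one]
    refine hS.trans (one_le_rpow one_le_two (mul_nonneg (Nat.cast_nonneg _) ?_))
    rw [sub_nonneg, div_le_one (hp.trans_le hpu)]
    exact hpu
  · simpa using norm_le_morreyNorm (u := u) (lam := Pi.single k₀ 1) hp k₀

lemma morreyNorm_one (hp : 0 < p) (hu : 0 < u) :
    morreyNorm d j u p 1 = 2 ^ (((j * d : ℕ) : ℝ) / u) := by
  have hsum : ∀ ν m, ∑ k ∈ subcube ν m, ‖(1 : MorreyIdx d j → ℂ) k‖ ^ p =
      #(subcube ν m : Finset (MorreyIdx d j)) := fun ν m => by simp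
  refine le_antisymm (morreyNorm_le fun ν hν m _ => ?_) ?_
  · rw [cubeTerm_le_iff hp (by positivity), hsum, ← rpow_mul zero_le_two, ← rpow_add two_pos]
    refine (card_subcube_le_two_rpow ν m).trans (rpow_le_rpow_of_exponent_le one_le_two ?_)
    have : ((ν * d : ℕ) : ℝ) * (p / u) ≤ ((j * d : ℕ) : ℝ) * (p / u) := by gcongr
    linarith [show ((j * d : ℕ) : ℝ) / u * p = ((j * d : ℕ) : ℝ) * (p / u) by ring]
  · have h := cubeTerm_le_morreyNorm (u := u) (p := p) (lam := (1 : MorreyIdx d j → ℂ))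
      (le_refl j) (m := fun _ => 0) fun _ => by simp
    rw [cubeTerm, hsum, subcube_self, card_univ, Fintype.card_fun, Fintype.card_fin,
      Fintype.card_fin, ← pow_mul, Nat.cast_pow, Nat.cast_ofNat, ← rpow_natCast,
      ← rpow_mul zero_le_two, ← rpow_add two_pos] at h
    refine le_of_eq_of_le ?_ h
    congr 1
    ring

lemma idNorm_eq {N₁ N₂ : (MorreyIdx d j → ℂ) → ℝ} {C : ℝ} (hC : 0 ≤ C)
    (hle : ∀ lam, N₂ lam ≤ C * N₁ lam) {lam₀ : MorreyIdx d j → ℂ} (hpos : 0 < N₁ lam₀)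
    (hge : C * N₁ lam₀ ≤ N₂ lam₀) : idNorm d j N₁ N₂ = C := by
  refine le_antisymm (csInf_le ⟨0, fun _ h => h.1⟩ ⟨hC, hle⟩) (le_csInf ⟨C, hC, hle⟩ ?_)
  rintro C' ⟨-, hC'⟩
  exact le_of_mul_le_mul_right (hge.trans (hC' lam₀)) hpos

end Morrey

open Morrey

theorem stmt5_general (d : ℕ) (p₁ u₁ p₂ u₂ : ℝ)
    (hp₁ : 0 < p₁) (hpu₁ : p₁ ≤ u₁) (hp₂ : 0 < p₂) (hpu₂ : p₂ ≤ u₂) (j : ℕ) :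
    ((p₂ ≤ p₁ ∧ u₁ ≤ u₂) →
        idNorm d j (morreyNorm d j u₁ p₁) (morreyNorm d j u₂ p₂) = 1) ∧
    ((p₁ < p₂ ∧ p₂ / u₂ ≤ p₁ / u₁) →
        idNorm d j (morreyNorm d j u₁ p₁) (morreyNorm d j u₂ p₂) = 1) ∧
    ((p₂ ≤ p₁ ∧ u₂ < u₁) →
        idNorm d j (morreyNorm d j u₁ p₁) (morreyNorm d j u₂ p₂)
          = (2 : ℝ) ^ (((j * d : ℕ) : ℝ) * (1 / u₂ - 1 / u₁))) := by
  have hu₁ : 0 < u₁ := hp₁.trans_le hpu₁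
  have hu₂ : 0 < u₂ := hp₂.trans_le hpu₂
  have idNorm_eq_one
      (h : ∀ lam, morreyNorm d j u₂ p₂ lam ≤ morreyNorm d j u₁ p₁ lam) :
      idNorm d j (morreyNorm d j u₁ p₁) (morreyNorm d j u₂ p₂) = 1 :=
    idNorm_eq zero_le_one (fun lam => (one_mul (morreyNorm d j u₁ p₁ lam)).symm ▸ h lam)
      (lam₀ := Pi.single 0 1) (by rw [morreyNorm_single hp₁ hpu₁]; exact one_pos)
      (by rw [morreyNorm_single hp₁ hpu₁, morreyNorm_single hp₂ hpu₂, one_mul])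
  refine ⟨fun ⟨hp, hu⟩ => idNorm_eq_one fun lam => ?_,
    fun ⟨hp, hpu⟩ => idNorm_eq_one (morreyNorm_le_of_div_le hp₁ hp.le hpu), fun ⟨hp, hu⟩ => ?_⟩
  · have hexp : 1 / u₂ - 1 / u₁ ≤ 0 := sub_nonpos.2 (one_div_le_one_div_of_le hu₁ hu)
    simpa using morreyNorm_le_mul_of_le hp₂ hp (C := 1) (fun ν _ =>
      rpow_le_one_of_one_le_of_nonpos one_le_two
        (mul_nonpos_of_nonneg_of_nonpos (Nat.cast_nonneg _) hexp)) lam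
  · have hexp : 0 ≤ 1 / u₂ - 1 / u₁ := sub_nonneg.2 (one_div_le_one_div_of_le hu₂ hu.le)
    refine idNorm_eq (rpow_nonneg zero_le_two _) (morreyNorm_le_mul_of_le hp₂ hp fun ν hν =>
        rpow_le_rpow_of_exponent_le one_le_two (by gcongr)) (lam₀ := 1)
      (by rw [morreyNorm_one hp₁ hu₁]; positivity) ?_
    rw [morreyNorm_one hp₁ hu₁, morreyNorm_one hp₂ hu₂, ← rpow_add two_pos]
    exact le_of_eq (congrArg _ (by ring))

/-- norms of identity maps between finite Morrey sequence spaces. -/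
theorem stmt5 (d : ℕ) (hd : 0 < d) (p₁ u₁ p₂ u₂ : ℝ)
    (hp₁ : 0 < p₁) (hpu₁ : p₁ ≤ u₁) (hp₂ : 0 < p₂) (hpu₂ : p₂ ≤ u₂) (j : ℕ) :
    ((p₂ ≤ p₁ ∧ u₁ ≤ u₂) →
        idNorm d j (morreyNorm d j u₁ p₁) (morreyNorm d j u₂ p₂) = 1) ∧
    ((p₁ < p₂ ∧ p₂ / u₂ ≤ p₁ / u₁) →
        idNorm d j (morreyNorm d j u₁ p₁) (morreyNorm d j u₂ p₂) = 1) ∧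
    ((p₂ ≤ p₁ ∧ u₂ < u₁) →
        idNorm d j (morreyNorm d j u₁ p₁) (morreyNorm d j u₂ p₂)
          = (2 : ℝ) ^ (((j * d : ℕ) : ℝ) * (1 / u₂ - 1 / u₁))) :=
  stmt5_general d p₁ u₁ p₂ u₂ hp₁ hpu₁ hp₂ hpu₂ j
end

section
/- Let 0 < p₁ ≤ u₁ < ∞ and 0 < p₂ ≤ u₂ < ∞ with p₁ < p₂ and p₂/u₂ > p₁/u₁. Then there exists a constant c with 0 < c ≤ 1, independent of j, such that for all j ∈ ℕ₀: c · 2^{jd(1/u₂ − p₁/(u₁ p₂))} ≤ ‖id_j: m^{2^{jd}}_{u₁,p₁} → m^{2^{jd}}_{u₂,p₂}‖ ≤ 2^{jd(1/u₂ − p₁/(u₁ p₂))}. -/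
lemma term_nonneg (d j : ℕ) (u p : ℝ) (lam : MorreyIdx d j → ℂ) (ν : Fin (j+1))
    (m : Fin d → Fin (2 ^ (j - (ν : ℕ)))) :
    0 ≤ (2 : ℝ) ^ ((((ν : ℕ) * d : ℕ) : ℝ) * (1 / u - 1 / p)) *
      (∑ k : MorreyIdx d j,
        if memSubcube (ν : ℕ) (fun i => (m i : ℕ)) k then ‖lam k‖ ^ p else 0) ^ (1 / p) := by
  apply mul_nonneg (Real.rpow_nonneg (by norm_num) _)
  apply Real.rpow_nonneg
  apply Finset.sum_nonneg
  intro k _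
  split
  · exact Real.rpow_nonneg (norm_nonneg _) _
  · exact le_refl 0

lemma term_le_morreyNorm (d j : ℕ) (u p : ℝ) (lam : MorreyIdx d j → ℂ) (ν : Fin (j+1))
    (m : Fin d → Fin (2 ^ (j - (ν : ℕ)))) :
    (2 : ℝ) ^ ((((ν : ℕ) * d : ℕ) : ℝ) * (1 / u - 1 / p)) *
      (∑ k : MorreyIdx d j,
        if memSubcube (ν : ℕ) (fun i => (m i : ℕ)) k then ‖lam k‖ ^ p else 0) ^ (1 / p)
      ≤ morreyNorm d j u p lam := by
  unfold morreyNorm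
  refine le_ciSup_of_le (Set.Finite.bddAbove (Set.finite_range _)) ν ?_
  exact le_ciSup (f := fun m : Fin d → Fin (2 ^ (j - (ν : ℕ))) =>
    (2 : ℝ) ^ ((((ν : ℕ) * d : ℕ) : ℝ) * (1 / u - 1 / p)) *
      (∑ k : MorreyIdx d j,
        if memSubcube (ν : ℕ) (fun i => (m i : ℕ)) k then ‖lam k‖ ^ p else 0) ^ (1 / p))
    (Set.Finite.bddAbove (Set.finite_range _)) m

lemma morreyNorm_le (d j : ℕ) (u p : ℝ) (lam : MorreyIdx d j → ℂ) (B : ℝ)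
    (hB : ∀ (ν : Fin (j+1)) (m : Fin d → Fin (2 ^ (j - (ν : ℕ)))),
      (2 : ℝ) ^ ((((ν : ℕ) * d : ℕ) : ℝ) * (1 / u - 1 / p)) *
      (∑ k : MorreyIdx d j,
        if memSubcube (ν : ℕ) (fun i => (m i : ℕ)) k then ‖lam k‖ ^ p else 0) ^ (1 / p) ≤ B) :
    morreyNorm d j u p lam ≤ B := by
  unfold morreyNorm
  apply ciSup_le
  intro ν
  haveI : Nonempty (Fin (2 ^ (j - (ν : ℕ)))) := ⟨⟨0, Nat.two_pow_pos _⟩⟩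
  exact ciSup_le (hB ν)

lemma morreyNorm_nonneg (d j : ℕ) (u p : ℝ) (lam : MorreyIdx d j → ℂ) :
    0 ≤ morreyNorm d j u p lam := by
  haveI : Nonempty (Fin (2 ^ j)) := ⟨⟨0, Nat.two_pow_pos _⟩⟩
  refine le_trans (term_nonneg d j u p lam ⟨0, Nat.succ_pos j⟩ (fun _ => Classical.arbitrary _))
    (term_le_morreyNorm _ _ _ _ _ _ _)

lemma norm_le_morreyNorm (d j : ℕ) (u p : ℝ) (hp : 0 < p) (lam : MorreyIdx d j → ℂ)
    (k : MorreyIdx d j) : ‖lam k‖ ≤ morreyNorm d j u p lam := by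
  have h := term_le_morreyNorm d j u p lam ⟨0, Nat.succ_pos j⟩ k
  have hsum : (∑ k' : MorreyIdx d j,
      if memSubcube ((⟨0, Nat.succ_pos j⟩ : Fin (j+1)) : ℕ) (fun i => ((k i : ℕ))) k'
      then ‖lam k'‖ ^ p else 0) = ‖lam k‖ ^ p := by
    have hmem : ∀ k' : MorreyIdx d j,
        memSubcube ((⟨0, Nat.succ_pos j⟩ : Fin (j+1)) : ℕ) (fun i => ((k i : ℕ))) k' ↔ k' = k := by
      intro k'
      unfold memSubcube
      simp only [pow_zero, Nat.div_one]
      constructor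
      · intro h'; funext i; exact Fin.ext (h' i)
      · intro h'; subst h'; intro i; rfl
    rw [Finset.sum_congr rfl (fun k' _ => by rw [if_congr (hmem k') rfl rfl])]
    simp
  rw [hsum] at h
  have h2 : ((((⟨0, Nat.succ_pos j⟩ : Fin (j+1)) : ℕ) * d : ℕ) : ℝ) * (1 / u - 1 / p) = 0 := by
    norm_num
  rw [h2, Real.rpow_zero, one_mul, ← Real.rpow_mul (norm_nonneg _),
    mul_one_div_cancel hp.ne', Real.rpow_one] at h
  exact h

lemma upper_aux (d j : ℕ) (p₁ u₁ p₂ u₂ : ℝ)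
    (hp₁ : 0 < p₁) (hu₁ : 0 < u₁) (hp₂ : 0 < p₂) (hu₂ : 0 < u₂) (hp : p₁ < p₂)
    (hα : 0 ≤ 1 / u₂ - p₁ / (u₁ * p₂)) (lam : MorreyIdx d j → ℂ) :
    morreyNorm d j u₂ p₂ lam ≤
      (2 : ℝ) ^ (((j * d : ℕ) : ℝ) * (1 / u₂ - p₁ / (u₁ * p₂))) * morreyNorm d j u₁ p₁ lam := by
  set α := 1 / u₂ - p₁ / (u₁ * p₂) with hαdef
  set A := morreyNorm d j u₁ p₁ lam with hA
  have hA0 : 0 ≤ A := morreyNorm_nonneg d j u₁ p₁ lam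
  have hk : ∀ k, ‖lam k‖ ≤ A := norm_le_morreyNorm d j u₁ p₁ hp₁ lam
  apply morreyNorm_le
  intro ν m
  set S₁ : ℝ := ∑ k : MorreyIdx d j,
    if memSubcube (ν : ℕ) (fun i => (m i : ℕ)) k then ‖lam k‖ ^ p₁ else 0 with hS₁
  set S₂ : ℝ := ∑ k : MorreyIdx d j,
    if memSubcube (ν : ℕ) (fun i => (m i : ℕ)) k then ‖lam k‖ ^ p₂ else 0 with hS₂
  have hS₁nn : 0 ≤ S₁ := Finset.sum_nonneg fun k _ => by
    split
    · exact Real.rpow_nonneg (norm_nonneg _) _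
    · exact le_refl 0
  have hS₂nn : 0 ≤ S₂ := Finset.sum_nonneg fun k _ => by
    split
    · exact Real.rpow_nonneg (norm_nonneg _) _
    · exact le_refl 0
  set b : ℝ := (((ν : ℕ) * d : ℕ) : ℝ) * (1 / p₁ - 1 / u₁) with hb
  -- Step 1 : S₂ ≤ A^(p₂-p₁) * S₁
  have hs : S₂ ≤ A ^ (p₂ - p₁) * S₁ := by
    rw [hS₂, hS₁, Finset.mul_sum]
    apply Finset.sum_le_sum
    intro k _
    split_ifs with hc
    · rcases eq_or_lt_of_le (norm_nonneg (lam k)) with h0 | h0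
      · rw [← h0, Real.zero_rpow hp₂.ne']
        positivity
      · have hsplit : ‖lam k‖ ^ p₂ = ‖lam k‖ ^ (p₂ - p₁) * ‖lam k‖ ^ p₁ := by
          rw [← Real.rpow_add h0, sub_add_cancel]
        rw [hsplit]
        exact mul_le_mul_of_nonneg_right
          (Real.rpow_le_rpow (le_of_lt h0) (hk k) (by linarith))
          (Real.rpow_nonneg (norm_nonneg _) _)
    · simp
  -- Step 2 : S₁ ≤ (2^b * A)^p₁
  have hs1 : S₁ ≤ ((2 : ℝ) ^ b * A) ^ p₁ := by
    have ht := term_le_morreyNorm d j u₁ p₁ lam ν m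
    rw [← hS₁, ← hA] at ht
    have h2pos : (0:ℝ) < (2 : ℝ) ^ ((((ν : ℕ) * d : ℕ) : ℝ) * (1 / u₁ - 1 / p₁)) :=
      Real.rpow_pos_of_pos two_pos _
    have hx : (2:ℝ) ^ b = ((2:ℝ) ^ ((((ν : ℕ) * d : ℕ) : ℝ) * (1 / u₁ - 1 / p₁)))⁻¹ := by
      rw [← Real.rpow_neg (by norm_num : (0:ℝ) ≤ 2)]
      congr 1
      rw [hb]; ring
    have hroot : S₁ ^ (1 / p₁) ≤ (2:ℝ) ^ b * A := by
      rw [hx, ← div_eq_inv_mul, le_div_iff₀' h2pos]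
      exact ht
    calc S₁ = S₁ ^ ((1 / p₁) * p₁) := by
          rw [one_div_mul_cancel hp₁.ne', Real.rpow_one]
      _ = (S₁ ^ (1 / p₁)) ^ p₁ := Real.rpow_mul hS₁nn _ _
      _ ≤ ((2 : ℝ) ^ b * A) ^ p₁ :=
          Real.rpow_le_rpow (Real.rpow_nonneg hS₁nn _) hroot hp₁.le
  -- Combine
  have h1 : S₂ ≤ (2:ℝ) ^ (b * p₁) * A ^ p₂ := by
    calc S₂ ≤ A ^ (p₂ - p₁) * S₁ := hs
      _ ≤ A ^ (p₂ - p₁) * ((2 : ℝ) ^ b * A) ^ p₁ :=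
          mul_le_mul_of_nonneg_left hs1 (Real.rpow_nonneg hA0 _)
      _ = (2:ℝ) ^ (b * p₁) * A ^ p₂ := by
          rw [Real.mul_rpow (Real.rpow_nonneg (by norm_num) _) hA0,
            ← Real.rpow_mul (by norm_num : (0:ℝ) ≤ 2),
            show A ^ (p₂ - p₁) * ((2:ℝ) ^ (b * p₁) * A ^ p₁)
              = (2:ℝ) ^ (b * p₁) * (A ^ (p₂ - p₁) * A ^ p₁) from by ring,
            ← Real.rpow_add' hA0 (by rw [sub_add_cancel]; exact hp₂.ne'),
            sub_add_cancel]
  have hcomb : S₂ ^ (1 / p₂) ≤ (2:ℝ) ^ (b * p₁ * (1 / p₂)) * A := by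
    calc S₂ ^ (1 / p₂) ≤ ((2:ℝ) ^ (b * p₁) * A ^ p₂) ^ (1 / p₂) :=
        Real.rpow_le_rpow hS₂nn h1 (by positivity)
      _ = (2:ℝ) ^ (b * p₁ * (1 / p₂)) * A := by
        rw [Real.mul_rpow (Real.rpow_nonneg (by norm_num) _) (Real.rpow_nonneg hA0 _),
          ← Real.rpow_mul (by norm_num : (0:ℝ) ≤ 2),
          ← Real.rpow_mul hA0, mul_one_div_cancel hp₂.ne', Real.rpow_one]
  -- Final
  have hexple : (((ν : ℕ) * d : ℕ) : ℝ) * (1 / u₂ - 1 / p₂) + b * p₁ * (1 / p₂)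
      ≤ ((j * d : ℕ) : ℝ) * α := by
    have heq : (((ν : ℕ) * d : ℕ) : ℝ) * (1 / u₂ - 1 / p₂) + b * p₁ * (1 / p₂)
        = (((ν : ℕ) * d : ℕ) : ℝ) * α := by
      rw [hb, hαdef]
      field_simp
      ring
    rw [heq]
    apply mul_le_mul_of_nonneg_right _ hα
    exact_mod_cast Nat.mul_le_mul_right d (Nat.lt_succ_iff.mp ν.isLt)
  calc (2 : ℝ) ^ ((((ν : ℕ) * d : ℕ) : ℝ) * (1 / u₂ - 1 / p₂)) * S₂ ^ (1 / p₂)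
      ≤ (2 : ℝ) ^ ((((ν : ℕ) * d : ℕ) : ℝ) * (1 / u₂ - 1 / p₂)) *
        ((2:ℝ) ^ (b * p₁ * (1 / p₂)) * A) := by
        exact mul_le_mul_of_nonneg_left hcomb (Real.rpow_nonneg (by norm_num) _)
    _ = (2 : ℝ) ^ ((((ν : ℕ) * d : ℕ) : ℝ) * (1 / u₂ - 1 / p₂) + b * p₁ * (1 / p₂)) * A := by
        rw [← mul_assoc, ← Real.rpow_add two_pos]
    _ ≤ (2 : ℝ) ^ (((j * d : ℕ) : ℝ) * α) * A := by
        exact mul_le_mul_of_nonneg_right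
          (Real.rpow_le_rpow_of_exponent_le one_le_two hexple) hA0

lemma count_upper (j ν s M : ℕ) :
    (Finset.univ.filter
      (fun x : Fin (2^j) => (x:ℕ)/2^ν = M ∧ 2^s ∣ (x:ℕ))).card ≤ 2^(ν - s) := by
  have := Finset.card_le_card_of_injOn
    (f := fun x : Fin (2^j) => (⟨((x:ℕ)/2^s) % 2^(ν-s), Nat.mod_lt _ (Nat.two_pow_pos _)⟩ : Fin (2^(ν-s))))
    (s := Finset.univ.filter (fun x : Fin (2^j) => (x:ℕ)/2^ν = M ∧ 2^s ∣ (x:ℕ)))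
    (t := Finset.univ) (fun a _ => Finset.mem_univ _) ?_
  · simpa using this
  · intro x hx y hy hxy
    simp only [Finset.coe_filter, Set.mem_setOf_eq, Finset.mem_univ, true_and] at hx hy
    obtain ⟨hx1, hx2⟩ := hx
    obtain ⟨hy1, hy2⟩ := hy
    simp only [Fin.mk.injEq] at hxy
    have hxs : 2^s * ((x:ℕ)/2^s) = (x:ℕ) := Nat.mul_div_cancel' hx2
    have hys : 2^s * ((y:ℕ)/2^s) = (y:ℕ) := Nat.mul_div_cancel' hy2
    rcases le_or_gt s ν with hsv | hvs
    · -- s ≤ ν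
      have hdiv : ∀ z : Fin (2^j), 2^s ∣ (z:ℕ) → (z:ℕ)/2^ν = M →
          (z:ℕ)/2^s = 2^(ν-s) * M + ((z:ℕ)/2^s) % 2^(ν-s) := by
        intro z hz hzM
        have h1 : (z:ℕ)/2^s/2^(ν-s) = (z:ℕ)/2^ν := by
          rw [Nat.div_div_eq_div_mul, ← pow_add, Nat.add_sub_cancel' hsv]
        conv_lhs => rw [← Nat.div_add_mod ((z:ℕ)/2^s) (2^(ν-s))]
        rw [h1, hzM]
      have hx3 := hdiv x hx2 hx1
      have hy3 := hdiv y hy2 hy1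
      have : (x:ℕ)/2^s = (y:ℕ)/2^s := by rw [hx3, hy3, hxy]
      exact Fin.ext (by rw [← hxs, ← hys, this])
    · -- ν < s
      have hdiv : ∀ z : Fin (2^j), 2^s ∣ (z:ℕ) → (z:ℕ)/2^ν = M →
          2^(s-ν) * ((z:ℕ)/2^s) = M := by
        intro z hz hzM
        have h1 : (z:ℕ) = 2^ν * (2^(s-ν) * ((z:ℕ)/2^s)) := by
          rw [← mul_assoc, ← pow_add, Nat.add_sub_cancel' hvs.le]
          exact (Nat.mul_div_cancel' hz).symm
        rw [← hzM]
        conv_rhs => rw [h1]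
        rw [Nat.mul_div_cancel_left _ (Nat.two_pow_pos _)]
      have := (hdiv x hx2 hx1).trans (hdiv y hy2 hy1).symm
      have hab := Nat.eq_of_mul_eq_mul_left (Nat.two_pow_pos (s-ν)) this
      exact Fin.ext (by rw [← hxs, ← hys, hab])

lemma count_lower (j s : ℕ) (hsj : s ≤ j) :
    2^(j - s) ≤ (Finset.univ.filter (fun x : Fin (2^j) => 2^s ∣ (x:ℕ))).card := by
  have hlt : ∀ y : Fin (2^(j-s)), 2^s * (y:ℕ) < 2^j := by
    intro y
    calc 2^s * (y:ℕ) < 2^s * 2^(j-s) :=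
        mul_lt_mul_of_pos_left y.isLt (Nat.two_pow_pos _)
      _ = 2^j := by rw [← pow_add, Nat.add_sub_cancel' hsj]
  have := Finset.card_le_card_of_injOn
    (f := fun y : Fin (2^(j-s)) => (⟨2^s * (y:ℕ), hlt y⟩ : Fin (2^j)))
    (s := (Finset.univ : Finset (Fin (2^(j-s)))))
    (t := Finset.univ.filter (fun x : Fin (2^j) => 2^s ∣ (x:ℕ)))
    (fun a _ => by simp)
    (fun a _ b _ hab => by
      simp only [Fin.mk.injEq] at hab
      exact Fin.ext (Nat.eq_of_mul_eq_mul_left (Nat.two_pow_pos s) hab))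
  simpa using this

lemma sum_eq_prod (d j ν s : ℕ) (m : Fin d → ℕ) :
    (∑ k : MorreyIdx d j,
      if (memSubcube ν m k ∧ ∀ i, 2^s ∣ ((k i : ℕ))) then (1:ℝ) else 0)
    = ∏ i : Fin d, ∑ x : Fin (2^j),
        if ((x:ℕ)/2^ν = m i ∧ 2^s ∣ (x:ℕ)) then (1:ℝ) else 0 := by
  have hpt : ∀ k : MorreyIdx d j,
      (if (memSubcube ν m k ∧ ∀ i, 2^s ∣ ((k i : ℕ))) then (1:ℝ) else 0)
      = ∏ i : Fin d, if ((k i : ℕ)/2^ν = m i ∧ 2^s ∣ ((k i : ℕ))) then (1:ℝ) else 0 := by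
    intro k
    by_cases h : memSubcube ν m k ∧ ∀ i, 2^s ∣ ((k i : ℕ))
    · rw [if_pos h]
      exact (Finset.prod_eq_one (fun i _ => if_pos ⟨h.1 i, h.2 i⟩)).symm
    · rw [if_neg h]
      have hex : ∃ i, ¬(((k i : ℕ))/2^ν = m i ∧ 2^s ∣ ((k i : ℕ))) := by
        by_contra hc
        push_neg at hc
        exact h ⟨fun i => (hc i).1, fun i => (hc i).2⟩
      obtain ⟨i, hi⟩ := hex
      exact (Finset.prod_eq_zero (Finset.mem_univ i)
        (if_neg hi : (if ((k i : ℕ))/2^ν = m i ∧ 2^s ∣ ((k i : ℕ)) then (1:ℝ) else 0) = 0)).symm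
  rw [Finset.sum_congr rfl (fun k _ => hpt k)]
  have hps := Finset.prod_univ_sum (fun _ : Fin d => (Finset.univ : Finset (Fin (2^j))))
    (fun i (x : Fin (2^j)) => if ((x:ℕ)/2^ν = m i ∧ 2^s ∣ (x:ℕ)) then (1:ℝ) else 0)
  rw [Fintype.piFinset_univ] at hps
  exact hps.symm

lemma sum_eq_prod' (d j s : ℕ) :
    (∑ k : MorreyIdx d j, if (∀ i, 2^s ∣ ((k i : ℕ))) then (1:ℝ) else 0)
    = ∏ i : Fin d, ∑ x : Fin (2^j), if (2^s ∣ (x:ℕ)) then (1:ℝ) else 0 := by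
  have hpt : ∀ k : MorreyIdx d j,
      (if (∀ i, 2^s ∣ ((k i : ℕ))) then (1:ℝ) else 0)
      = ∏ i : Fin d, if (2^s ∣ ((k i : ℕ))) then (1:ℝ) else 0 := by
    intro k
    by_cases h : ∀ i, 2^s ∣ ((k i : ℕ))
    · rw [if_pos h]
      exact (Finset.prod_eq_one (fun i _ => if_pos (h i))).symm
    · rw [if_neg h]
      have hex : ∃ i, ¬(2^s ∣ ((k i : ℕ))) := by
        by_contra hc
        push_neg at hc
        exact h hc
      obtain ⟨i, hi⟩ := hex
      exact (Finset.prod_eq_zero (Finset.mem_univ i)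
        (if_neg hi : (if 2^s ∣ ((k i : ℕ)) then (1:ℝ) else 0) = 0)).symm
  rw [Finset.sum_congr rfl (fun k _ => hpt k)]
  have hps := Finset.prod_univ_sum (fun _ : Fin d => (Finset.univ : Finset (Fin (2^j))))
    (fun _ (x : Fin (2^j)) => if (2^s ∣ (x:ℕ)) then (1:ℝ) else 0)
  rw [Fintype.piFinset_univ] at hps
  exact hps.symm

lemma sum_ind_le (d j ν s : ℕ) (m : Fin d → ℕ) :
    (∑ k : MorreyIdx d j,
      if (memSubcube ν m k ∧ ∀ i, 2^s ∣ ((k i : ℕ))) then (1:ℝ) else 0)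
    ≤ (2:ℝ) ^ ((ν - s) * d) := by
  rw [sum_eq_prod]
  have hle : ∀ i : Fin d, (∑ x : Fin (2^j),
      if ((x:ℕ)/2^ν = m i ∧ 2^s ∣ (x:ℕ)) then (1:ℝ) else 0) ≤ (2:ℝ)^(ν - s) := by
    intro i
    rw [Finset.sum_boole]
    calc ((Finset.univ.filter
        (fun x : Fin (2^j) => (x:ℕ)/2^ν = m i ∧ 2^s ∣ (x:ℕ))).card : ℝ)
        ≤ ((2^(ν-s) : ℕ) : ℝ) := Nat.cast_le.mpr (count_upper j ν s (m i))
      _ = (2:ℝ)^(ν-s) := by push_cast; ring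
  calc (∏ i : Fin d, ∑ x : Fin (2^j),
        if ((x:ℕ)/2^ν = m i ∧ 2^s ∣ (x:ℕ)) then (1:ℝ) else 0)
      ≤ ∏ _i : Fin d, (2:ℝ)^(ν - s) := by
        apply Finset.prod_le_prod
        · intro i _
          apply Finset.sum_nonneg
          intro x _
          split <;> norm_num
        · intro i _
          exact hle i
    _ = (2:ℝ) ^ ((ν - s) * d) := by
        rw [Finset.prod_const, Finset.card_univ, Fintype.card_fin, ← pow_mul]

lemma sum_ind_ge (d j s : ℕ) (hsj : s ≤ j) :
    (2:ℝ) ^ ((j - s) * d)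
    ≤ ∑ k : MorreyIdx d j, if (∀ i, 2^s ∣ ((k i : ℕ))) then (1:ℝ) else 0 := by
  rw [sum_eq_prod']
  have hge : ∀ _i : Fin d, (2:ℝ)^(j - s) ≤ ∑ x : Fin (2^j),
      if (2^s ∣ (x:ℕ)) then (1:ℝ) else 0 := by
    intro i
    rw [Finset.sum_boole]
    calc (2:ℝ)^(j-s) = ((2^(j-s) : ℕ) : ℝ) := by push_cast; ring
      _ ≤ _ := Nat.cast_le.mpr (count_lower j s hsj)
  calc (2:ℝ) ^ ((j - s) * d) = ∏ _i : Fin d, (2:ℝ)^(j - s) := by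
        rw [Finset.prod_const, Finset.card_univ, Fintype.card_fin, ← pow_mul]
    _ ≤ _ := by
        apply Finset.prod_le_prod
        · intro i _; positivity
        · intro i _; exact hge i

lemma lower_aux (d j : ℕ) (p₁ u₁ p₂ u₂ : ℝ)
    (hp₁ : 0 < p₁) (hu₁ : 0 < u₁) (hpu₁ : p₁ ≤ u₁) (hp₂ : 0 < p₂) (hu₂ : 0 < u₂) :
    ∃ lam : MorreyIdx d j → ℂ, morreyNorm d j u₁ p₁ lam ≤ 1 ∧
      (2:ℝ) ^ (-(d:ℝ)/p₂) * (2:ℝ) ^ (((j*d : ℕ):ℝ) * (1/u₂ - p₁/(u₁*p₂)))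
        ≤ morreyNorm d j u₂ p₂ lam := by
  set s : ℕ := ⌈(j:ℝ) * (p₁/u₁)⌉₊ with hsdef
  have hγ0 : 0 ≤ p₁/u₁ := by positivity
  have hγ1 : p₁/u₁ ≤ 1 := (div_le_one hu₁).mpr hpu₁
  have hsj : s ≤ j := by
    rw [hsdef, Nat.ceil_le]
    calc (j:ℝ) * (p₁/u₁) ≤ (j:ℝ) * 1 := mul_le_mul_of_nonneg_left hγ1 (Nat.cast_nonneg j)
      _ = (j:ℝ) := mul_one _
  have hs_ge : (j:ℝ) * (p₁/u₁) ≤ s := Nat.le_ceil _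
  have hs_lt : (s:ℝ) < (j:ℝ) * (p₁/u₁) + 1 := Nat.ceil_lt_add_one (by positivity)
  refine ⟨fun k => if ∀ i, 2^s ∣ ((k i : ℕ)) then (1:ℂ) else 0, ?_, ?_⟩
  · -- N₁ ≤ 1
    apply morreyNorm_le
    intro ν m
    have hrw : (∑ k : MorreyIdx d j,
        if memSubcube (ν : ℕ) (fun i => (m i : ℕ)) k
        then ‖if ∀ i, 2^s ∣ ((k i : ℕ)) then (1:ℂ) else 0‖ ^ p₁ else 0)
        = ∑ k : MorreyIdx d j,
          if (memSubcube (ν : ℕ) (fun i => (m i : ℕ)) k ∧ ∀ i, 2^s ∣ ((k i : ℕ)))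
          then (1:ℝ) else 0 := by
      apply Finset.sum_congr rfl
      intro k _
      by_cases hc : memSubcube (ν : ℕ) (fun i => (m i : ℕ)) k <;>
        by_cases hdv : (∀ i, 2^s ∣ ((k i : ℕ))) <;>
        simp [hc, hdv, Real.zero_rpow hp₁.ne']
    rw [hrw]
    have hsum_le := sum_ind_le d j (ν : ℕ) s (fun i => (m i : ℕ))
    have hsum_nn : (0:ℝ) ≤ ∑ k : MorreyIdx d j,
        if (memSubcube (ν : ℕ) (fun i => (m i : ℕ)) k ∧ ∀ i, 2^s ∣ ((k i : ℕ)))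
        then (1:ℝ) else 0 :=
      Finset.sum_nonneg fun k _ => by split <;> norm_num
    have he : (((ν : ℕ) * d : ℕ):ℝ) * (1/u₁ - 1/p₁)
        + ((((ν : ℕ) - s) * d : ℕ):ℝ) * (1/p₁) ≤ 0 := by
      rcases le_or_gt (ν : ℕ) s with hns | hsn
      · rw [Nat.sub_eq_zero_of_le hns]
        simp only [Nat.zero_mul, Nat.cast_zero, zero_mul, add_zero]
        apply mul_nonpos_of_nonneg_of_nonpos (Nat.cast_nonneg _)
        rw [sub_nonpos]
        exact one_div_le_one_div_of_le hp₁ hpu₁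
      · have hνj : ((ν : ℕ) : ℝ) ≤ (j : ℝ) :=
          Nat.cast_le.mpr (Nat.lt_succ_iff.mp ν.isLt)
        have h1 : ((ν : ℕ) : ℝ) * (p₁/u₁) ≤ (s:ℝ) :=
          le_trans (mul_le_mul_of_nonneg_right hνj hγ0) hs_ge
        have h2 : ((ν : ℕ) : ℝ) * p₁ ≤ (s:ℝ) * u₁ := by
          have h1' := mul_le_mul_of_nonneg_right h1 hu₁.le
          calc ((ν : ℕ) : ℝ) * p₁ = (((ν : ℕ) : ℝ) * (p₁/u₁)) * u₁ := by
                field_simp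
            _ ≤ (s:ℝ) * u₁ := h1'
        have heq : (((ν : ℕ) * d : ℕ):ℝ) * (1/u₁ - 1/p₁)
            + ((((ν : ℕ) - s) * d : ℕ):ℝ) * (1/p₁)
            = (d:ℝ) * ((((ν : ℕ) : ℝ) * p₁ - (s:ℝ) * u₁) / (u₁ * p₁)) := by
          push_cast [Nat.cast_sub hsn.le]
          field_simp
          ring
        rw [heq]
        apply mul_nonpos_of_nonneg_of_nonpos (Nat.cast_nonneg d)
        apply div_nonpos_of_nonpos_of_nonneg (by linarith) (by positivity)
    calc (2:ℝ) ^ ((((ν : ℕ) * d : ℕ):ℝ) * (1/u₁ - 1/p₁)) *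
          (∑ k : MorreyIdx d j,
            if (memSubcube (ν : ℕ) (fun i => (m i : ℕ)) k ∧ ∀ i, 2^s ∣ ((k i : ℕ)))
            then (1:ℝ) else 0) ^ (1/p₁)
        ≤ (2:ℝ) ^ ((((ν : ℕ) * d : ℕ):ℝ) * (1/u₁ - 1/p₁)) *
          ((2:ℝ) ^ (((ν : ℕ) - s) * d)) ^ ((1:ℝ)/p₁) := by
          apply mul_le_mul_of_nonneg_left
            (Real.rpow_le_rpow hsum_nn hsum_le (by positivity))
            (Real.rpow_nonneg (by norm_num) _)
      _ = (2:ℝ) ^ ((((ν : ℕ) * d : ℕ):ℝ) * (1/u₁ - 1/p₁)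
            + ((((ν : ℕ) - s) * d : ℕ):ℝ) * (1/p₁)) := by
          rw [← Real.rpow_natCast 2 (((ν : ℕ) - s) * d),
            ← Real.rpow_mul (by norm_num : (0:ℝ) ≤ 2),
            ← Real.rpow_add two_pos]
      _ ≤ (2:ℝ) ^ (0:ℝ) := Real.rpow_le_rpow_of_exponent_le one_le_two he
      _ = 1 := Real.rpow_zero 2
  · -- N₂ lower bound
    set m0 : Fin d → Fin (2 ^ (j - ((Fin.last j : Fin (j+1)) : ℕ))) :=
      fun _ => ⟨0, Nat.two_pow_pos _⟩ with hm0
    have ht := term_le_morreyNorm d j u₂ p₂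
      (fun k => if ∀ i, 2^s ∣ ((k i : ℕ)) then (1:ℂ) else 0) (Fin.last j) m0
    have hmem : ∀ k : MorreyIdx d j,
        memSubcube ((Fin.last j : Fin (j+1)) : ℕ) (fun i => (m0 i : ℕ)) k := by
      intro k i
      show (k i : ℕ) / 2 ^ ((Fin.last j : Fin (j+1)) : ℕ) = (m0 i : ℕ)
      have h0 : (m0 i : ℕ) = 0 := rfl
      rw [h0, Fin.val_last]
      exact Nat.div_eq_of_lt (k i).isLt
    have hsum_eq : (∑ k : MorreyIdx d j,
        if memSubcube ((Fin.last j : Fin (j+1)) : ℕ) (fun i => (m0 i : ℕ)) k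
        then ‖(fun k : MorreyIdx d j =>
          if ∀ i, 2^s ∣ ((k i : ℕ)) then (1:ℂ) else 0) k‖ ^ p₂ else 0)
        = ∑ k : MorreyIdx d j,
          if (∀ i, 2^s ∣ ((k i : ℕ))) then (1:ℝ) else 0 := by
      apply Finset.sum_congr rfl
      intro k _
      rw [if_pos (hmem k)]
      by_cases hdv : (∀ i, 2^s ∣ ((k i : ℕ))) <;>
        simp [hdv, Real.zero_rpow hp₂.ne']
    rw [hsum_eq] at ht
    simp only [Fin.val_last] at ht
    have hge := sum_ind_ge d j s hsj
    have he₂ : -(d:ℝ)/p₂ + ((j*d : ℕ):ℝ) * (1/u₂ - p₁/(u₁*p₂))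
        ≤ ((j*d : ℕ):ℝ) * (1/u₂ - 1/p₂) + (((j - s) * d : ℕ):ℝ) * (1/p₂) := by
      have heq : ((j*d : ℕ):ℝ) * (1/u₂ - 1/p₂) + (((j - s) * d : ℕ):ℝ) * (1/p₂)
          - (-(d:ℝ)/p₂ + ((j*d : ℕ):ℝ) * (1/u₂ - p₁/(u₁*p₂)))
          = (d:ℝ) * (((j:ℝ) * (p₁/u₁) + 1 - (s:ℝ)) / p₂) := by
        push_cast [Nat.cast_sub hsj]
        field_simp
        ring
      have hnn : 0 ≤ (d:ℝ) * (((j:ℝ) * (p₁/u₁) + 1 - (s:ℝ)) / p₂) :=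
        mul_nonneg (Nat.cast_nonneg d) (div_nonneg (by linarith) hp₂.le)
      linarith [heq ▸ hnn]
    have hsum_nn : (0:ℝ) ≤ ∑ k : MorreyIdx d j,
        if (∀ i, 2^s ∣ ((k i : ℕ))) then (1:ℝ) else 0 :=
      Finset.sum_nonneg fun k _ => by split <;> norm_num
    calc (2:ℝ) ^ (-(d:ℝ)/p₂) * (2:ℝ) ^ (((j*d : ℕ):ℝ) * (1/u₂ - p₁/(u₁*p₂)))
        = (2:ℝ) ^ (-(d:ℝ)/p₂ + ((j*d : ℕ):ℝ) * (1/u₂ - p₁/(u₁*p₂))) :=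
          (Real.rpow_add two_pos _ _).symm
      _ ≤ (2:ℝ) ^ (((j*d : ℕ):ℝ) * (1/u₂ - 1/p₂) + (((j - s) * d : ℕ):ℝ) * (1/p₂)) :=
          Real.rpow_le_rpow_of_exponent_le one_le_two he₂
      _ = (2:ℝ) ^ (((j*d : ℕ):ℝ) * (1/u₂ - 1/p₂)) *
          ((2:ℝ) ^ ((j - s) * d)) ^ ((1:ℝ)/p₂) := by
          rw [Real.rpow_add two_pos,
            Real.rpow_mul (by norm_num : (0:ℝ) ≤ 2) ((((j - s) * d : ℕ)):ℝ) (1/p₂),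
            Real.rpow_natCast (2:ℝ) ((j - s) * d)]
      _ ≤ (2:ℝ) ^ (((j*d : ℕ):ℝ) * (1/u₂ - 1/p₂)) *
          (∑ k : MorreyIdx d j,
            if (∀ i, 2^s ∣ ((k i : ℕ))) then (1:ℝ) else 0) ^ ((1:ℝ)/p₂) := by
          apply mul_le_mul_of_nonneg_left
            (Real.rpow_le_rpow (by positivity) hge (by positivity))
            (Real.rpow_nonneg (by norm_num) _)
      _ ≤ morreyNorm d j u₂ p₂ _ := ht

/-- in the remaining case `p₁ < p₂`, `p₂/u₂ > p₁/u₁`, the norm of the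
identity `m^{2^{jd}}_{u₁,p₁} → m^{2^{jd}}_{u₂,p₂}` is equivalent to
`2^{jd(1/u₂ - p₁/(u₁ p₂))}`, with constants independent of `j`. -/
theorem stmt6 (d : ℕ) (hd : 0 < d) (p₁ u₁ p₂ u₂ : ℝ)
    (hp₁ : 0 < p₁) (hpu₁ : p₁ ≤ u₁) (hp₂ : 0 < p₂) (hpu₂ : p₂ ≤ u₂)
    (hp : p₁ < p₂) (hratio : p₁ / u₁ < p₂ / u₂) :
    ∃ c : ℝ, 0 < c ∧ c ≤ 1 ∧ ∀ j : ℕ,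
      c * (2 : ℝ) ^ (((j * d : ℕ) : ℝ) * (1 / u₂ - p₁ / (u₁ * p₂)))
          ≤ idNorm d j (morreyNorm d j u₁ p₁) (morreyNorm d j u₂ p₂) ∧
        idNorm d j (morreyNorm d j u₁ p₁) (morreyNorm d j u₂ p₂)
          ≤ (2 : ℝ) ^ (((j * d : ℕ) : ℝ) * (1 / u₂ - p₁ / (u₁ * p₂))) := by
  have hu₁ : 0 < u₁ := lt_of_lt_of_le hp₁ hpu₁
  have hu₂ : 0 < u₂ := lt_of_lt_of_le hp₂ hpu₂
  have hα : 0 ≤ 1/u₂ - p₁/(u₁*p₂) := by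
    have h := hratio
    rw [div_lt_div_iff₀ hu₁ hu₂] at h
    rw [sub_nonneg, div_le_div_iff₀ (by positivity) hu₂]
    nlinarith
  refine ⟨(2:ℝ)^(-(d:ℝ)/p₂), Real.rpow_pos_of_pos two_pos _, ?_, ?_⟩
  · exact Real.rpow_le_one_of_one_le_of_nonpos one_le_two
      (div_nonpos_of_nonpos_of_nonneg (neg_nonpos.mpr (Nat.cast_nonneg d)) hp₂.le)
  · intro j
    constructor
    · -- lower bound
      obtain ⟨lam, h1, h2⟩ := lower_aux d j p₁ u₁ p₂ u₂ hp₁ hu₁ hpu₁ hp₂ hu₂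
      apply le_csInf
      · exact ⟨(2:ℝ)^(((j*d : ℕ):ℝ)*(1/u₂-p₁/(u₁*p₂))),
          Real.rpow_nonneg (by norm_num) _,
          upper_aux d j p₁ u₁ p₂ u₂ hp₁ hu₁ hp₂ hu₂ hp hα⟩
      · rintro C ⟨hC0, hC⟩
        exact le_trans h2 (le_trans (hC lam) (mul_le_of_le_one_right hC0 h1))
    · -- upper bound
      apply csInf_le ⟨0, fun x hx => hx.1⟩
      exact ⟨Real.rpow_nonneg (by norm_num) _,
        upper_aux d j p₁ u₁ p₂ u₂ hp₁ hu₁ hp₂ hu₂ hp hα⟩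
end

section
/- Let 1 ≤ p₂ < u₂ < ∞ and j ∈ ℕ. Set ν₀ = min{ν ∈ ℕ : 2^{νd} ≥ 2^{jd p₂/u₂}}, so that ν₀ ≤ j. Let ℰ be the family of all sequences ε = (ε_k)_{k ∈ 𝒦_j} with ε_k ∈ {−1,0,1} such that for every dyadic cube Q_{−ν₀,m} ⊆ Q_{−j,0} there is exactly one k ∈ 𝒦_j with Q_{0,k} ⊆ Q_{−ν₀,m} and ε_k ≠ 0. Then ‖ε | m^{2^{jd}}_{u₂,p₂}‖ = 1 for every ε ∈ ℰ. -/
/-- The family `ℰ`: sequences `ε` with `ε_k ∈ {-1,0,1}` such that for every dyadic cube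
`Q_{-ν₀,m} ⊆ Q_{-j,0}` (encoded by `m : Fin d → Fin (2^(j-ν₀))`) there is exactly one
`k ∈ 𝒦_j` with `Q_{0,k} ⊆ Q_{-ν₀,m}` and `ε_k ≠ 0`. -/
def memE (d j ν₀ : ℕ) (ε : MorreyIdx d j → ℂ) : Prop :=
  (∀ k, ε k = -1 ∨ ε k = 0 ∨ ε k = 1) ∧
  ∀ m : Fin d → Fin (2 ^ (j - ν₀)), ∃! k : MorreyIdx d j,
    memSubcube ν₀ (fun i => (m i : ℕ)) k ∧ ε k ≠ 0

/-- with `ν₀ = min{ν ∈ ℕ : 2^{νd} ≥ 2^{jd p₂/u₂}}` one has `ν₀ ≤ j`, and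
every `ε ∈ ℰ` satisfies `‖ε | m^{2^{jd}}_{u₂,p₂}‖ = 1`. -/
theorem stmt15 (d : ℕ) (hd : 0 < d) (p₂ u₂ : ℝ) (hp₂ : 1 ≤ p₂) (hpu : p₂ < u₂)
    (j : ℕ) (hj : 1 ≤ j) (ν₀ : ℕ)
    (hν₀ : IsLeast {ν : ℕ | 1 ≤ ν ∧
      (2 : ℝ) ^ (((ν * d : ℕ) : ℝ)) ≥ (2 : ℝ) ^ (((j * d : ℕ) : ℝ) * p₂ / u₂)} ν₀) :
    ν₀ ≤ j ∧ ∀ ε : MorreyIdx d j → ℂ, memE d j ν₀ ε → morreyNorm d j u₂ p₂ ε = 1 := by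
  classical
  have hp0 : (0:ℝ) < p₂ := lt_of_lt_of_le one_pos hp₂
  have hu0 : (0:ℝ) < u₂ := lt_trans hp0 hpu
  have hjmem : j ∈ {ν : ℕ | 1 ≤ ν ∧
      (2 : ℝ) ^ (((ν * d : ℕ) : ℝ)) ≥ (2 : ℝ) ^ (((j * d : ℕ) : ℝ) * p₂ / u₂)} := by
    refine ⟨hj, ?_⟩
    apply Real.rpow_le_rpow_of_exponent_le one_le_two
    rw [mul_div_assoc]
    exact mul_le_of_le_one_right (by positivity) ((div_le_one hu0).2 hpu.le)
  have hν₀j : ν₀ ≤ j := hν₀.2 hjmem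
  have hkey : ((j * d : ℕ) : ℝ) * p₂ / u₂ ≤ ((ν₀ * d : ℕ) : ℝ) :=
    (Real.rpow_le_rpow_left_iff one_lt_two).1 hν₀.1.2
  refine ⟨hν₀j, ?_⟩
  rintro ε ⟨hε1, hε2⟩
  -- norm of nonzero entries is 1
  have hnorm : ∀ k, ε k ≠ 0 → ‖ε k‖ = 1 := by
    intro k hk
    rcases hε1 k with h | h | h <;> simp [h] at hk ⊢
  -- the inner sum equals a cardinality
  have hsum : ∀ (ν : ℕ) (m : Fin d → ℕ),
      (∑ k : MorreyIdx d j, if memSubcube ν m k then ‖ε k‖ ^ p₂ else 0)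
      = ((Finset.univ.filter
          (fun k : MorreyIdx d j => memSubcube ν m k ∧ ε k ≠ 0)).card : ℝ) := by
    intro ν m
    rw [Finset.card_filter]
    push_cast
    apply Finset.sum_congr rfl
    intro k _
    by_cases h1 : memSubcube ν m k <;> by_cases h2 : ε k = 0 <;>
      simp [h1, h2, hnorm k, Real.zero_rpow hp0.ne', Real.rpow_natCast]
  have hdivlt : ∀ (k : MorreyIdx d j) (i : Fin d), (k i : ℕ) / 2 ^ ν₀ < 2 ^ (j - ν₀) := by
    intro k i
    apply Nat.div_lt_of_lt_mul
    calc (k i : ℕ) < 2 ^ j := (k i).isLt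
      _ = 2 ^ ν₀ * 2 ^ (j - ν₀) := by rw [← pow_add]; congr 1; omega
  have huniq : ∀ k k' : MorreyIdx d j, ε k ≠ 0 → ε k' ≠ 0 →
      (∀ i, (k i : ℕ) / 2 ^ ν₀ = (k' i : ℕ) / 2 ^ ν₀) → k = k' := by
    intro k k' hk hk' hsame
    obtain ⟨k₀, _, hu⟩ := hε2 (fun i => ⟨(k i : ℕ) / 2 ^ ν₀, hdivlt k i⟩)
    have e1 : k = k₀ := hu k ⟨fun i => rfl, hk⟩
    have e2 : k' = k₀ := hu k' ⟨fun i => (hsame i).symm, hk'⟩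
    rw [e1, e2]
  -- cardinality bounds
  have hcard1 : ∀ (ν : ℕ), ν ≤ ν₀ → ∀ m : Fin d → ℕ,
      (Finset.univ.filter
        (fun k : MorreyIdx d j => memSubcube ν m k ∧ ε k ≠ 0)).card ≤ 1 := by
    intro ν hν m
    apply Finset.card_le_one.2
    intro k hk k' hk'
    simp only [Finset.mem_filter] at hk hk'
    apply huniq k k' hk.2.2 hk'.2.2
    intro i
    have e : (2:ℕ) ^ ν₀ = 2 ^ ν * 2 ^ (ν₀ - ν) := by rw [← pow_add]; congr 1; omega
    rw [e, ← Nat.div_div_eq_div_mul, ← Nat.div_div_eq_div_mul, hk.2.1 i, hk'.2.1 i]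
  have hcard2 : ∀ (ν : ℕ), ν₀ ≤ ν → ∀ m : Fin d → ℕ,
      (Finset.univ.filter
        (fun k : MorreyIdx d j => memSubcube ν m k ∧ ε k ≠ 0)).card ≤ 2 ^ ((ν - ν₀) * d) := by
    intro ν hν m
    have h := Finset.card_le_card_of_injOn
      (s := Finset.univ.filter
        (fun k : MorreyIdx d j => memSubcube ν m k ∧ ε k ≠ 0))
      (f := fun (k : MorreyIdx d j) (i : Fin d) =>
        (⟨((k i : ℕ) / 2 ^ ν₀) % 2 ^ (ν - ν₀), Nat.mod_lt _ (Nat.two_pow_pos _)⟩ :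
          Fin (2 ^ (ν - ν₀))))
      (t := (Finset.univ : Finset (Fin d → Fin (2 ^ (ν - ν₀)))))
      (fun _ _ => Finset.mem_univ _) ?_
    · calc _ ≤ _ := h
        _ = 2 ^ ((ν - ν₀) * d) := by
          simp [Finset.card_univ, Fintype.card_fun, pow_mul]
    · intro k hk k' hk' hf
      simp only [Finset.mem_coe, Finset.mem_filter] at hk hk'
      apply huniq k k' hk.2.2 hk'.2.2
      intro i
      have hmod : ((k i : ℕ) / 2 ^ ν₀) % 2 ^ (ν - ν₀)
          = ((k' i : ℕ) / 2 ^ ν₀) % 2 ^ (ν - ν₀) := by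
        have := congrFun hf i
        simpa using this
      have hdiv : ((k i : ℕ) / 2 ^ ν₀) / 2 ^ (ν - ν₀)
          = ((k' i : ℕ) / 2 ^ ν₀) / 2 ^ (ν - ν₀) := by
        have e : (2:ℕ) ^ ν₀ * 2 ^ (ν - ν₀) = 2 ^ ν := by rw [← pow_add]; congr 1; omega
        rw [Nat.div_div_eq_div_mul, Nat.div_div_eq_div_mul, e, hk.2.1 i, hk'.2.1 i]
      have a1 := Nat.div_add_mod ((k i : ℕ) / 2 ^ ν₀) (2 ^ (ν - ν₀))
      have a2 := Nat.div_add_mod ((k' i : ℕ) / 2 ^ ν₀) (2 ^ (ν - ν₀))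
      rw [hdiv, hmod] at a1
      rw [a2] at a1
      exact a1.symm
  -- each term of the sup is at most 1
  have hterm : ∀ (ν : Fin (j + 1)) (m : Fin d → Fin (2 ^ (j - (ν : ℕ)))),
      (2 : ℝ) ^ ((((ν : ℕ) * d : ℕ) : ℝ) * (1 / u₂ - 1 / p₂)) *
        (∑ k : MorreyIdx d j,
          if memSubcube (ν : ℕ) (fun i => (m i : ℕ)) k then ‖ε k‖ ^ p₂ else 0) ^ (1 / p₂)
      ≤ 1 := by
    intro ν m
    rw [hsum]
    set c := (Finset.univ.filter (fun k : MorreyIdx d j =>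
      memSubcube (ν : ℕ) (fun i => (m i : ℕ)) k ∧ ε k ≠ 0)).card with hc
    have hdu : (1:ℝ) / u₂ - 1 / p₂ ≤ 0 := by
      have := one_div_le_one_div_of_le hp0 hpu.le
      linarith
    by_cases hle : (ν : ℕ) ≤ ν₀
    · have h1 : (2 : ℝ) ^ ((((ν : ℕ) * d : ℕ) : ℝ) * (1 / u₂ - 1 / p₂)) ≤ 1 :=
        Real.rpow_le_one_of_one_le_of_nonpos one_le_two
          (mul_nonpos_of_nonneg_of_nonpos (by positivity) hdu)
      have h2 : ((c : ℝ)) ^ (1 / p₂) ≤ 1 :=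
        Real.rpow_le_one (by positivity)
          (by exact_mod_cast hcard1 (ν : ℕ) hle (fun i => (m i : ℕ))) (by positivity)
      exact mul_le_one₀ h1 (by positivity) h2
    · push_neg at hle
      have hle' : ν₀ ≤ (ν : ℕ) := hle.le
      have hcle : (c : ℝ) ≤ (2 : ℝ) ^ (((((ν : ℕ) - ν₀) * d : ℕ) : ℝ)) := by
        rw [Real.rpow_natCast]
        exact_mod_cast hcard2 (ν : ℕ) hle' (fun i => (m i : ℕ))
      calc (2 : ℝ) ^ ((((ν : ℕ) * d : ℕ) : ℝ) * (1 / u₂ - 1 / p₂)) * (c : ℝ) ^ (1 / p₂)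
          ≤ (2 : ℝ) ^ ((((ν : ℕ) * d : ℕ) : ℝ) * (1 / u₂ - 1 / p₂)) *
            (((2 : ℝ) ^ (((((ν : ℕ) - ν₀) * d : ℕ) : ℝ))) ^ (1 / p₂)) := by
            apply mul_le_mul_of_nonneg_left _ (by positivity)
            exact Real.rpow_le_rpow (by positivity) hcle (by positivity)
        _ = (2 : ℝ) ^ ((((ν : ℕ) * d : ℕ) : ℝ) * (1 / u₂ - 1 / p₂) +
            (((((ν : ℕ) - ν₀) * d : ℕ) : ℝ)) * (1 / p₂)) := by
            rw [← Real.rpow_mul (by norm_num : (0:ℝ) ≤ 2),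
              ← Real.rpow_add (by norm_num : (0:ℝ) < 2)]
        _ ≤ (2 : ℝ) ^ (0 : ℝ) := by
            apply Real.rpow_le_rpow_of_exponent_le one_le_two
            have hνj : ((ν : ℕ) : ℝ) ≤ (j : ℝ) := by
              exact_mod_cast Nat.lt_succ_iff.1 ν.isLt
            have hkey' : (j : ℝ) * (d : ℝ) * p₂ / u₂ ≤ (ν₀ : ℝ) * (d : ℝ) := by
              push_cast at hkey; linarith
            have hcast : ((((ν : ℕ) - ν₀) * d : ℕ) : ℝ)
                = (((ν : ℕ) : ℝ) - (ν₀ : ℝ)) * (d : ℝ) := by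
              push_cast [Nat.cast_sub hle']; ring
            rw [hcast]
            push_cast
            rw [div_le_iff₀ hu0] at hkey'
            have hd0 : (0:ℝ) ≤ (d : ℝ) := by positivity
            rw [sub_le_iff_le_add] at hdu
            -- goal: ν*d*(1/u₂-1/p₂) + (ν-ν₀)*d*(1/p₂) ≤ 0
            have expand : ((ν : ℕ) : ℝ) * (d:ℝ) * (1 / u₂ - 1 / p₂) +
                (((ν : ℕ) : ℝ) - (ν₀:ℝ)) * (d:ℝ) * (1 / p₂)
                = ((ν : ℕ) : ℝ) * (d:ℝ) / u₂ - (ν₀:ℝ) * (d:ℝ) / p₂ := by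
              field_simp; ring
            rw [expand, sub_nonpos, div_le_div_iff₀ hu0 hp0]
            nlinarith [mul_le_mul_of_nonneg_right (mul_le_mul_of_nonneg_right hνj hd0) hp0.le]
        _ = 1 := Real.rpow_zero 2
  -- the witness term equal to 1
  obtain ⟨k₀, ⟨-, hk₀⟩, -⟩ := hε2 (fun _ => ⟨0, Nat.two_pow_pos _⟩)
  set m0 : Fin d → Fin (2 ^ (j - 0)) := fun i => ⟨(k₀ i : ℕ), (k₀ i).isLt⟩ with hm0
  have hwit : (2 : ℝ) ^ (((0 * d : ℕ) : ℝ) * (1 / u₂ - 1 / p₂)) *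
      (∑ k : MorreyIdx d j,
        if memSubcube 0 (fun i => (m0 i : ℕ)) k then ‖ε k‖ ^ p₂ else 0) ^ (1 / p₂) = 1 := by
    have hiff : ∀ k : MorreyIdx d j,
        memSubcube (0 : ℕ) (fun i => (m0 i : ℕ)) k ↔ k = k₀ := by
      intro k
      constructor
      · intro h
        funext i
        have := h i
        simp [hm0, pow_zero] at this
        exact Fin.ext this
      · rintro rfl i
        simp [hm0]
    have hs : (∑ k : MorreyIdx d j,
        if memSubcube (0 : ℕ) (fun i => (m0 i : ℕ)) k then ‖ε k‖ ^ p₂ else 0)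
        = ‖ε k₀‖ ^ p₂ := by
      rw [Finset.sum_congr rfl (fun k _ => by rw [if_congr (hiff k) rfl rfl])]
      simp
    simp only [Nat.zero_mul, Nat.cast_zero, zero_mul, Real.rpow_zero, one_mul]
    rw [hs, hnorm k₀ hk₀, Real.one_rpow, Real.one_rpow]
  -- assemble
  unfold morreyNorm
  apply le_antisymm
  · apply ciSup_le
    intro ν
    haveI : Nonempty (Fin (2 ^ (j - (ν : ℕ)))) := ⟨⟨0, Nat.two_pow_pos _⟩⟩
    exact ciSup_le (fun m => hterm ν m)
  · calc (1:ℝ) = _ := hwit.symm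
      _ ≤ ⨆ m : Fin d → Fin (2 ^ (j - ((⟨0, Nat.succ_pos j⟩ : Fin (j+1)) : ℕ))),
          (2 : ℝ) ^ (((((⟨0, Nat.succ_pos j⟩ : Fin (j+1)) : ℕ) * d : ℕ) : ℝ) *
            (1 / u₂ - 1 / p₂)) *
          (∑ k : MorreyIdx d j,
            if memSubcube ((⟨0, Nat.succ_pos j⟩ : Fin (j+1)) : ℕ) (fun i => (m i : ℕ)) k
            then ‖ε k‖ ^ p₂ else 0) ^ (1 / p₂) :=
          le_ciSup (f := fun m : Fin d → Fin (2 ^ (j - ((⟨0, Nat.succ_pos j⟩ : Fin (j+1)) : ℕ))) =>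
            (2 : ℝ) ^ (((((⟨0, Nat.succ_pos j⟩ : Fin (j+1)) : ℕ) * d : ℕ) : ℝ) *
              (1 / u₂ - 1 / p₂)) *
            (∑ k : MorreyIdx d j,
              if memSubcube ((⟨0, Nat.succ_pos j⟩ : Fin (j+1)) : ℕ) (fun i => (m i : ℕ)) k
              then ‖ε k‖ ^ p₂ else 0) ^ (1 / p₂))
            (Set.Finite.bddAbove (Set.finite_range _)) m0
      _ ≤ _ := le_ciSup (f := fun ν : Fin (j+1) =>
            ⨆ m : Fin d → Fin (2 ^ (j - (ν : ℕ))),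
              (2 : ℝ) ^ ((((ν : ℕ) * d : ℕ) : ℝ) * (1 / u₂ - 1 / p₂)) *
              (∑ k : MorreyIdx d j,
                if memSubcube (ν : ℕ) (fun i => (m i : ℕ)) k
                then ‖ε k‖ ^ p₂ else 0) ^ (1 / p₂))
            (Set.Finite.bddAbove (Set.finite_range _))
            (⟨0, Nat.succ_pos j⟩ : Fin (j+1))
end
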